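/- arXiv:1806.10626 — 2 statements merged into one kernel-verified Lean document; each statement's English description precedes it below -/
import Mathlib

section
/- There is an absolute constant C > 0 such that for every L > 0, every matrix A ∈ [−L,L]^{n×m}, and every γ ∈ (0,1), setting N = √(nm), there exist matrices A^str, A^psd ∈ ℝ^{n×m} with A = A^str + A^psd satisfying: (1) A^str is a block matrix with at most C·(1/γ^{10})^{3/γ²} blocks; (2) ‖A^psd‖₂ ≤ 7γNL; and (3) ‖A^str‖_max ≤ (2/γ^{11})·L. -/
open MeasureTheory
open scoped ENNReal

/-- The Euclidean norm of a vector in `ℝ^n`. -/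
noncomputable def enorm2 {n : ℕ} (v : Fin n → ℝ) : ℝ := Real.sqrt (∑ i, v i ^ 2)

namespace SD
open Finset






open Finset

lemma enorm2_nonneg {n : ℕ} (v : Fin n → ℝ) : 0 ≤ enorm2 v := Real.sqrt_nonneg _

lemma sq_enorm2 {n : ℕ} (v : Fin n → ℝ) : enorm2 v ^ 2 = ∑ i, v i ^ 2 :=
  Real.sq_sqrt (by positivity)

lemma enorm2_le_sqrt {n : ℕ} {v : Fin n → ℝ} {c : ℝ} (h : ∑ i, v i ^ 2 ≤ c) :
    enorm2 v ≤ Real.sqrt c := Real.sqrt_le_sqrt h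

lemma enorm2_le_one {n : ℕ} {v : Fin n → ℝ} (h : ∑ i, v i ^ 2 ≤ 1) : enorm2 v ≤ 1 := by
  simpa using enorm2_le_sqrt h

lemma abs_dot_le {n : ℕ} (v w : Fin n → ℝ) :
    |∑ i, v i * w i| ≤ enorm2 v * enorm2 w := by
  have h := Finset.sum_mul_sq_le_sq_mul_sq Finset.univ v w
  have h2 : (enorm2 v * enorm2 w) ^ 2 = (∑ i, v i ^ 2) * ∑ i, w i ^ 2 := by
    rw [mul_pow, sq_enorm2, sq_enorm2]
  have h3 : (∑ i, v i * w i) ^ 2 ≤ (enorm2 v * enorm2 w) ^ 2 := by rw [h2]; exact h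
  have hnn : 0 ≤ enorm2 v * enorm2 w := mul_nonneg (enorm2_nonneg v) (enorm2_nonneg w)
  have h4 := abs_le_of_sq_le_sq' h3 hnn
  exact abs_le.mpr h4


lemma mulVec_sq_bound {n m : ℕ} (B : Matrix (Fin n) (Fin m) ℝ) (t : Finset (Fin m))
    (v : Fin m → ℝ) (hv : ∀ j ∉ t, v j = 0) :
    ∑ i, (B.mulVec v i) ^ 2 ≤ (∑ i, ∑ j ∈ t, B i j ^ 2) * ∑ j, v j ^ 2 := by
  have key : ∀ i, (B.mulVec v i) ^ 2 ≤ (∑ j ∈ t, B i j ^ 2) * ∑ j, v j ^ 2 := by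
    intro i
    have h1 : B.mulVec v i = ∑ j ∈ t, B i j * v j := by
      rw [Matrix.mulVec, dotProduct]
      rw [← Finset.sum_subset (Finset.subset_univ t)]
      intro j _ hj; rw [hv j hj, mul_zero]
    rw [h1]
    calc (∑ j ∈ t, B i j * v j) ^ 2 ≤ (∑ j ∈ t, B i j ^ 2) * ∑ j ∈ t, v j ^ 2 :=
          Finset.sum_mul_sq_le_sq_mul_sq t _ _
    _ ≤ (∑ j ∈ t, B i j ^ 2) * ∑ j, v j ^ 2 := by
        apply mul_le_mul_of_nonneg_left _ (by positivity)
        exact Finset.sum_le_sum_of_subset_of_nonneg (Finset.subset_univ t)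
          (fun j _ _ => sq_nonneg _)
  calc ∑ i, (B.mulVec v i) ^ 2 ≤ ∑ i, (∑ j ∈ t, B i j ^ 2) * ∑ j, v j ^ 2 :=
        Finset.sum_le_sum (fun i _ => key i)
  _ = (∑ i, ∑ j ∈ t, B i j ^ 2) * ∑ j, v j ^ 2 := by rw [← Finset.sum_mul]

lemma enorm2_mulVec_le {n m : ℕ} (B : Matrix (Fin n) (Fin m) ℝ) (t : Finset (Fin m))
    (v : Fin m → ℝ) (hv : ∀ j ∉ t, v j = 0) {c : ℝ} (hc : 0 ≤ c)
    (hB : ∑ i, ∑ j ∈ t, B i j ^ 2 ≤ c ^ 2) :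
    enorm2 (B.mulVec v) ≤ c * enorm2 v := by
  have h := mulVec_sq_bound B t v hv
  have : ∑ i, (B.mulVec v i) ^ 2 ≤ c ^ 2 * ∑ j, v j ^ 2 :=
    h.trans (mul_le_mul_of_nonneg_right hB (by positivity))
  calc enorm2 (B.mulVec v) ≤ Real.sqrt (c ^ 2 * ∑ j, v j ^ 2) := enorm2_le_sqrt this
  _ = c * enorm2 v := by
      rw [Real.sqrt_mul (by positivity), Real.sqrt_sq hc]; rfl





open Finset

variable {n m : ℕ}

def Rcls {k : ℕ} (f : Fin k → List ℤ) (a : List ℤ) : Finset (Fin k) :=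
  univ.filter (fun i => f i = a)

noncomputable def CE (A : Matrix (Fin n) (Fin m) ℝ) (f : Fin n → List ℤ)
    (g : Fin m → List ℤ) : Matrix (Fin n) (Fin m) ℝ :=
  fun i j => (∑ i' ∈ Rcls f (f i), ∑ j' ∈ Rcls g (g j), A i' j') /
    (((Rcls f (f i)).card : ℝ) * ((Rcls g (g j)).card : ℝ))

def IsBlock (f : Fin n → List ℤ) (g : Fin m → List ℤ)
    (M : Matrix (Fin n) (Fin m) ℝ) : Prop :=
  ∀ i i' j j', f i = f i' → g j = g j' → M i j = M i' j'

noncomputable def frob (X : Matrix (Fin n) (Fin m) ℝ) : ℝ := ∑ i, ∑ j, X i j ^ 2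

noncomputable def ip (X Y : Matrix (Fin n) (Fin m) ℝ) : ℝ := ∑ i, ∑ j, X i j * Y i j

lemma mem_Rcls_self {k : ℕ} (f : Fin k → List ℤ) (i : Fin k) : i ∈ Rcls f (f i) := by
  simp [Rcls]

lemma Rcls_card_pos {k : ℕ} (f : Fin k → List ℤ) (i : Fin k) :
    0 < (Rcls f (f i)).card := Finset.card_pos.mpr ⟨i, mem_Rcls_self f i⟩

lemma CE_isBlock (A : Matrix (Fin n) (Fin m) ℝ) (f : Fin n → List ℤ)
    (g : Fin m → List ℤ) : IsBlock f g (CE A f g) := by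
  intro i i' j j' hf hg
  simp only [CE, hf, hg]

lemma abs_CE_le {A : Matrix (Fin n) (Fin m) ℝ} {L : ℝ} (hA : ∀ i j, |A i j| ≤ L)
    (f : Fin n → List ℤ) (g : Fin m → List ℤ) (i : Fin n) (j : Fin m) :
    |CE A f g i j| ≤ L := by
  have hL : 0 ≤ L := (abs_nonneg _).trans (hA i j)
  have hc1 := Rcls_card_pos f i
  have hc2 := Rcls_card_pos g j
  have hnum : |∑ i' ∈ Rcls f (f i), ∑ j' ∈ Rcls g (g j), A i' j'|
      ≤ ((Rcls f (f i)).card : ℝ) * ((Rcls g (g j)).card : ℝ) * L := by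
    calc |∑ i' ∈ Rcls f (f i), ∑ j' ∈ Rcls g (g j), A i' j'|
        ≤ ∑ i' ∈ Rcls f (f i), |∑ j' ∈ Rcls g (g j), A i' j'| := Finset.abs_sum_le_sum_abs _ _
      _ ≤ ∑ i' ∈ Rcls f (f i), ((Rcls g (g j)).card : ℝ) * L := by
          apply Finset.sum_le_sum; intro i' _
          calc |∑ j' ∈ Rcls g (g j), A i' j'| ≤ ∑ j' ∈ Rcls g (g j), |A i' j'| :=
                Finset.abs_sum_le_sum_abs _ _
            _ ≤ ∑ j' ∈ Rcls g (g j), L := Finset.sum_le_sum (fun j' _ => hA i' j')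
            _ = ((Rcls g (g j)).card : ℝ) * L := by rw [Finset.sum_const, nsmul_eq_mul]
      _ = ((Rcls f (f i)).card : ℝ) * (((Rcls g (g j)).card : ℝ) * L) := by
          rw [Finset.sum_const, nsmul_eq_mul]
      _ = _ := by ring
  rw [CE, abs_div]
  rw [div_le_iff₀ (by positivity)]
  calc |∑ i' ∈ Rcls f (f i), ∑ j' ∈ Rcls g (g j), A i' j'|
      ≤ ((Rcls f (f i)).card : ℝ) * ((Rcls g (g j)).card : ℝ) * L := hnum
    _ = L * |((Rcls f (f i)).card : ℝ) * ((Rcls g (g j)).card : ℝ)| := by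
        rw [abs_of_pos (by positivity)]; ring

lemma ortho (A : Matrix (Fin n) (Fin m) ℝ) (f : Fin n → List ℤ) (g : Fin m → List ℤ)
    {M : Matrix (Fin n) (Fin m) ℝ} (hM : IsBlock f g M) :
    ip (A - CE A f g) M = 0 := by
  classical
  have grpR : ∀ (X : Fin n → ℝ), ∑ i, X i = ∑ a ∈ univ.image f, ∑ i ∈ Rcls f a, X i := by
    intro X
    rw [← Finset.sum_fiberwise_of_maps_to (fun i _ => Finset.mem_image_of_mem f (mem_univ i)) X]
    rfl
  have grpC : ∀ (X : Fin m → ℝ), ∑ j, X j = ∑ b ∈ univ.image g, ∑ j ∈ Rcls g b, X j := by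
    intro X
    rw [← Finset.sum_fiberwise_of_maps_to (fun j _ => Finset.mem_image_of_mem g (mem_univ j)) X]
    rfl
  rw [ip]
  rw [grpR fun i => ∑ j, (A - CE A f g) i j * M i j]
  apply Finset.sum_eq_zero
  intro a ha
  obtain ⟨i₀, -, hi₀⟩ := Finset.mem_image.mp ha
  have hswap : ∑ i ∈ Rcls f a, ∑ j, (A - CE A f g) i j * M i j
      = ∑ b ∈ univ.image g, ∑ j ∈ Rcls g b, ∑ i ∈ Rcls f a, (A - CE A f g) i j * M i j := by
    rw [Finset.sum_comm]
    rw [grpC fun j => ∑ i ∈ Rcls f a, (A - CE A f g) i j * M i j]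
  rw [hswap]
  apply Finset.sum_eq_zero
  intro b hb
  obtain ⟨j₀, -, hj₀⟩ := Finset.mem_image.mp hb
  -- now fixed block (a, b)
  have hconst : ∀ j ∈ Rcls g b, ∀ i ∈ Rcls f a,
      (A - CE A f g) i j * M i j = A i j * M i₀ j₀ - CE A f g i₀ j₀ * M i₀ j₀ := by
    intro j hj i hi
    have hfi : f i = f i₀ := by
      rw [hi₀]; exact (Finset.mem_filter.mp hi).2
    have hgj : g j = g j₀ := by
      rw [hj₀]; exact (Finset.mem_filter.mp hj).2
    have hMc : M i j = M i₀ j₀ := hM i i₀ j j₀ hfi hgj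
    have hEc : CE A f g i j = CE A f g i₀ j₀ := CE_isBlock A f g i i₀ j j₀ hfi hgj
    simp only [Matrix.sub_apply, hMc, hEc]
    ring
  calc ∑ j ∈ Rcls g b, ∑ i ∈ Rcls f a, (A - CE A f g) i j * M i j
      = ∑ j ∈ Rcls g b, ∑ i ∈ Rcls f a, (A i j * M i₀ j₀ - CE A f g i₀ j₀ * M i₀ j₀) := by
        apply Finset.sum_congr rfl; intro j hj
        apply Finset.sum_congr rfl; intro i hi
        exact hconst j hj i hi
    _ = (∑ j ∈ Rcls g b, ∑ i ∈ Rcls f a, A i j) * M i₀ j₀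
        - ((Rcls g b).card : ℝ) * ((Rcls f a).card : ℝ) * (CE A f g i₀ j₀ * M i₀ j₀) := by
        simp only [Finset.sum_sub_distrib, Finset.sum_const, nsmul_eq_mul, ← Finset.sum_mul]
        push_cast; ring
    _ = 0 := by
        have hCE : CE A f g i₀ j₀
            = (∑ i ∈ Rcls f a, ∑ j ∈ Rcls g b, A i j) /
              (((Rcls f a).card : ℝ) * ((Rcls g b).card : ℝ)) := by
          rw [CE, hi₀, hj₀]
        rw [hCE]
        have hca : (0:ℝ) < ((Rcls f a).card : ℝ) := by
          have := Rcls_card_pos f i₀; rw [hi₀] at this; exact_mod_cast this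
        have hcb : (0:ℝ) < ((Rcls g b).card : ℝ) := by
          have := Rcls_card_pos g j₀; rw [hj₀] at this; exact_mod_cast this
        rw [Finset.sum_comm]
        field_simp
        ring


lemma ip_comm (X Y : Matrix (Fin n) (Fin m) ℝ) : ip X Y = ip Y X := by
  simp only [ip, mul_comm]

lemma ip_sub_left (X Y Z : Matrix (Fin n) (Fin m) ℝ) :
    ip (X - Y) Z = ip X Z - ip Y Z := by
  simp only [ip, Matrix.sub_apply, sub_mul, Finset.sum_sub_distrib]

lemma frob_nonneg (X : Matrix (Fin n) (Fin m) ℝ) : 0 ≤ frob X := by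
  apply Finset.sum_nonneg; intro i _; apply Finset.sum_nonneg; intro j _; positivity

lemma frob_expand (X Y : Matrix (Fin n) (Fin m) ℝ) :
    frob (X + Y) = frob X + 2 * ip X Y + frob Y := by
  simp only [frob, ip, Matrix.add_apply, add_sq, Finset.sum_add_distrib, Finset.mul_sum]
  ring

lemma ip_CS (X Y : Matrix (Fin n) (Fin m) ℝ) : (ip X Y) ^ 2 ≤ frob X * frob Y := by
  have h := Finset.sum_mul_sq_le_sq_mul_sq ((univ : Finset (Fin n)) ×ˢ (univ : Finset (Fin m)))
    (fun p => X p.1 p.2) (fun p => Y p.1 p.2)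
  simp only [ip, frob]
  rw [← Finset.sum_product' univ univ (fun i j => X i j * Y i j),
    ← Finset.sum_product' univ univ (fun i j => X i j ^ 2),
    ← Finset.sum_product' univ univ (fun i j => Y i j ^ 2)]
  exact h

/-- refinement -/
def Refines {k : ℕ} (f' f : Fin k → List ℤ) : Prop := ∀ i i', f' i = f' i' → f i = f i'

lemma isBlock_of_refines {f' f : Fin n → List ℤ} {g' g : Fin m → List ℤ}
    (hf : Refines f' f) (hg : Refines g' g) {M : Matrix (Fin n) (Fin m) ℝ}
    (hM : IsBlock f g M) : IsBlock f' g' M :=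
  fun i i' j j' h1 h2 => hM i i' j j' (hf _ _ h1) (hg _ _ h2)

lemma ip_D_eq (A : Matrix (Fin n) (Fin m) ℝ) {f' f : Fin n → List ℤ} {g' g : Fin m → List ℤ}
    (hf : Refines f' f) (hg : Refines g' g) {M : Matrix (Fin n) (Fin m) ℝ}
    (hM : IsBlock f' g' M) :
    ip (CE A f' g' - CE A f g) M = ip (A - CE A f g) M := by
  have h1 : ip (A - CE A f' g') M = 0 := ortho A f' g' hM
  have h2 : CE A f' g' - CE A f g = (A - CE A f g) - (A - CE A f' g') := by abel
  rw [h2, ip_sub_left, h1, sub_zero]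

lemma frob_CE_add (A : Matrix (Fin n) (Fin m) ℝ) {f' f : Fin n → List ℤ}
    {g' g : Fin m → List ℤ} (hf : Refines f' f) (hg : Refines g' g) :
    frob (CE A f' g') = frob (CE A f g) + frob (CE A f' g' - CE A f g) := by
  have hEblk : IsBlock f' g' (CE A f g) :=
    isBlock_of_refines hf hg (CE_isBlock A f g)
  have h1 : ip (A - CE A f g) (CE A f g) = 0 := ortho A f g (CE_isBlock A f g)
  have h2 : ip (A - CE A f' g') (CE A f g) = 0 := ortho A f' g' hEblk
  have hD : ip (CE A f' g' - CE A f g) (CE A f g) = 0 := by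
    have h3 : CE A f' g' - CE A f g = (A - CE A f g) - (A - CE A f' g') := by abel
    rw [h3, ip_sub_left, h1, h2, sub_zero]
  have h4 : CE A f' g' = CE A f g + (CE A f' g' - CE A f g) := by abel
  calc frob (CE A f' g') = frob (CE A f g + (CE A f' g' - CE A f g)) := by rw [← h4]
    _ = frob (CE A f g) + 2 * ip (CE A f g) (CE A f' g' - CE A f g)
        + frob (CE A f' g' - CE A f g) := frob_expand _ _
    _ = _ := by rw [ip_comm, hD]; ring

lemma frob_CE_le (A : Matrix (Fin n) (Fin m) ℝ) (f : Fin n → List ℤ)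
    (g : Fin m → List ℤ) : frob (CE A f g) ≤ frob A := by
  have h1 : ip (A - CE A f g) (CE A f g) = 0 := ortho A f g (CE_isBlock A f g)
  have h4 : A = CE A f g + (A - CE A f g) := by abel
  calc frob (CE A f g) ≤ frob (CE A f g) + frob (A - CE A f g) :=
        le_add_of_nonneg_right (frob_nonneg _)
    _ = frob A := by
        conv_rhs => rw [h4]
        rw [frob_expand, ip_comm, h1]; ring




open Finset

noncomputable def rtz (t : ℝ) : ℤ := if 0 ≤ t then ⌊t⌋ else ⌈t⌉

lemma rtz_abs_le (t : ℝ) : |(rtz t : ℝ)| ≤ |t| := by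
  unfold rtz
  split_ifs with h
  · rw [abs_of_nonneg (by exact_mod_cast Int.floor_nonneg.mpr h), abs_of_nonneg h]
    exact Int.floor_le t
  · push_neg at h
    have hc : (⌈t⌉ : ℝ) ≤ 0 := by
      have : ⌈t⌉ ≤ 0 := Int.ceil_le.mpr (by exact_mod_cast h.le)
      exact_mod_cast this
    rw [abs_of_nonpos hc, abs_of_neg h]
    exact neg_le_neg (Int.le_ceil t)

lemma rtz_err (t : ℝ) : |t - (rtz t : ℝ)| ≤ 1 := by
  unfold rtz
  split_ifs with h
  · rw [abs_of_nonneg (by linarith [Int.floor_le t])]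
    linarith [Int.lt_floor_add_one t]
  · rw [abs_of_nonpos (by linarith [Int.le_ceil t])]
    linarith [Int.ceil_lt_add_one t]

lemma round_vec {k : ℕ} (hk : 0 < k) {γ : ℝ} (hγ0 : 0 < γ) (x : Fin k → ℝ)
    (hx : ∑ j, x j ^ 2 ≤ 1) :
    ∃ kx : Fin k → ℤ,
      (∀ j, |(kx j : ℝ)| ≤ 2 / γ ^ 2) ∧
      (∑ j, (γ / Real.sqrt k * kx j) ^ 2 ≤ ∑ j, x j ^ 2) ∧
      (∑ j, (if |x j| ≤ 2 / (γ * Real.sqrt k) then x j - γ / Real.sqrt k * kx j else 0) ^ 2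
        ≤ γ ^ 2) ∧
      (((univ.filter (fun j => ¬ |x j| ≤ 2 / (γ * Real.sqrt k))).card : ℝ) ≤ γ ^ 2 * k / 4) ∧
      (∀ j, x j = γ / Real.sqrt k * kx j
        + (if |x j| ≤ 2 / (γ * Real.sqrt k) then x j - γ / Real.sqrt k * kx j else 0)
        + (if |x j| ≤ 2 / (γ * Real.sqrt k) then 0 else x j)) := by
  classical
  have hS : 0 < Real.sqrt k := Real.sqrt_pos.mpr (by exact_mod_cast hk)
  set S := Real.sqrt k with hSdef
  have hS2 : S ^ 2 = k := Real.sq_sqrt (by positivity)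
  set sc := γ / S with hscdef
  have hsc : 0 < sc := by positivity
  set θ := 2 / (γ * S) with hθdef
  have hθ : 0 < θ := by positivity
  set kx : Fin k → ℤ := fun j => if |x j| ≤ θ then rtz (x j / sc) else 0 with hkxdef
  have hkx_pos : ∀ j, |x j| ≤ θ → kx j = rtz (x j / sc) := fun j h => by
    simp only [hkxdef, h, if_true]
  have hkx_neg : ∀ j, ¬ |x j| ≤ θ → kx j = 0 := fun j h => by
    simp only [hkxdef, h, if_false]
  have habs : ∀ j, |sc * (kx j : ℝ)| ≤ |x j| := by
    intro j
    by_cases h : |x j| ≤ θ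
    · rw [hkx_pos j h, abs_mul, abs_of_pos hsc]
      calc sc * |(rtz (x j / sc) : ℝ)| ≤ sc * |x j / sc| :=
            mul_le_mul_of_nonneg_left (rtz_abs_le _) hsc.le
        _ = |x j| := by rw [abs_div, abs_of_pos hsc]; field_simp
    · rw [hkx_neg j h]; simp [abs_nonneg]
  refine ⟨kx, ?_, ?_, ?_, ?_, ?_⟩
  · intro j
    by_cases h : |x j| ≤ θ
    · rw [hkx_pos j h]
      calc |(rtz (x j / sc) : ℝ)| ≤ |x j / sc| := rtz_abs_le _
        _ = |x j| / sc := by rw [abs_div, abs_of_pos hsc]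
        _ ≤ θ / sc := by gcongr
        _ = 2 / γ ^ 2 := by rw [hθdef, hscdef]; field_simp
    · rw [hkx_neg j h]; simp; positivity
  · apply Finset.sum_le_sum
    intro j _
    calc (sc * (kx j : ℝ)) ^ 2 = |sc * (kx j : ℝ)| ^ 2 := (sq_abs _).symm
      _ ≤ |x j| ^ 2 := pow_le_pow_left₀ (abs_nonneg _) (habs j) 2
      _ = x j ^ 2 := sq_abs _
  · calc ∑ j, (if |x j| ≤ θ then x j - sc * (kx j : ℝ) else 0) ^ 2
        ≤ ∑ _j : Fin k, sc ^ 2 := by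
          apply Finset.sum_le_sum
          intro j _
          by_cases h : |x j| ≤ θ
          · rw [if_pos h, hkx_pos j h]
            have herr : |x j - sc * (rtz (x j / sc) : ℝ)| ≤ sc := by
              have h1 : x j - sc * (rtz (x j / sc) : ℝ)
                  = sc * (x j / sc - (rtz (x j / sc) : ℝ)) := by field_simp
              rw [h1, abs_mul, abs_of_pos hsc]
              calc sc * |x j / sc - (rtz (x j / sc) : ℝ)| ≤ sc * 1 :=
                    mul_le_mul_of_nonneg_left (rtz_err _) hsc.le
                _ = sc := mul_one sc
            calc (x j - sc * (rtz (x j / sc) : ℝ)) ^ 2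
                = |x j - sc * (rtz (x j / sc) : ℝ)| ^ 2 := (sq_abs _).symm
              _ ≤ sc ^ 2 := pow_le_pow_left₀ (abs_nonneg _) herr 2
          · rw [if_neg h]
            simpa using sq_nonneg sc
      _ = k * sc ^ 2 := by
          rw [Finset.sum_const, Finset.card_univ, Fintype.card_fin, nsmul_eq_mul]
      _ = γ ^ 2 := by rw [hscdef, div_pow, hS2]; field_simp
  · have hcard : ∀ j ∈ univ.filter (fun j => ¬ |x j| ≤ θ), θ ^ 2 ≤ x j ^ 2 := by
      intro j hj
      have h := (Finset.mem_filter.mp hj).2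
      push_neg at h
      calc θ ^ 2 ≤ |x j| ^ 2 := pow_le_pow_left₀ hθ.le h.le 2
        _ = x j ^ 2 := sq_abs _
    have h2 : ((univ.filter (fun j => ¬ |x j| ≤ θ)).card : ℝ) * θ ^ 2 ≤ 1 := by
      calc ((univ.filter (fun j => ¬ |x j| ≤ θ)).card : ℝ) * θ ^ 2
          = ∑ _j ∈ univ.filter (fun j => ¬ |x j| ≤ θ), θ ^ 2 := by
            rw [Finset.sum_const, nsmul_eq_mul]
        _ ≤ ∑ j ∈ univ.filter (fun j => ¬ |x j| ≤ θ), x j ^ 2 := Finset.sum_le_sum hcard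
        _ ≤ ∑ j, x j ^ 2 := Finset.sum_le_sum_of_subset_of_nonneg (Finset.filter_subset _ _)
            (fun j _ _ => sq_nonneg _)
        _ ≤ 1 := hx
    have hθ2 : θ ^ 2 = 4 / (γ ^ 2 * k) := by
      rw [hθdef, div_pow, mul_pow, hS2]; norm_num
    rw [hθ2] at h2
    have hden : (0:ℝ) < 4 / (γ ^ 2 * k) := by
      have : (0:ℝ) < (k:ℝ) := by exact_mod_cast hk
      positivity
    have h3 := (le_div_iff₀ hden).mpr h2
    calc ((univ.filter (fun j => ¬ |x j| ≤ θ)).card : ℝ)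
        ≤ 1 / (4 / (γ ^ 2 * k)) := h3
      _ = γ ^ 2 * k / 4 := by rw [one_div_div]
  · intro j
    by_cases h : |x j| ≤ θ
    · rw [if_pos h, if_pos h]; ring
    · rw [if_neg h, if_neg h, hkx_neg j h]; simp



lemma round_vec' {k : ℕ} (hk : 0 < k) {γ : ℝ} (hγ0 : 0 < γ) (x : Fin k → ℝ)
    (hx : ∑ j, x j ^ 2 ≤ 1) :
    ∃ (kx : Fin k → ℤ) (xt r s : Fin k → ℝ),
      (∀ j, xt j = γ / Real.sqrt k * kx j) ∧
      (∀ j, |(kx j : ℝ)| ≤ 2 / γ ^ 2) ∧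
      (∑ j, xt j ^ 2 ≤ ∑ j, x j ^ 2) ∧
      (∑ j, r j ^ 2 ≤ γ ^ 2) ∧
      (∃ t : Finset (Fin k), (∀ j, j ∉ t → s j = 0) ∧ ((t.card : ℝ) ≤ γ ^ 2 * k / 4)) ∧
      (∀ j, s j ^ 2 ≤ x j ^ 2) ∧
      x = xt + r + s := by
  classical
  obtain ⟨kx, h1, h2, h3, h4, h5⟩ := round_vec hk hγ0 x hx
  refine ⟨kx, fun j => γ / Real.sqrt k * kx j,
    fun j => if |x j| ≤ 2 / (γ * Real.sqrt k) then x j - γ / Real.sqrt k * kx j else 0,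
    fun j => if |x j| ≤ 2 / (γ * Real.sqrt k) then 0 else x j,
    fun j => rfl, h1, h2, h3,
    ⟨univ.filter (fun j => ¬ |x j| ≤ 2 / (γ * Real.sqrt k)), ?_, h4⟩, ?_, ?_⟩
  · intro j hj
    simp only [Finset.mem_filter, Finset.mem_univ, true_and, not_not] at hj
    simp [hj]
  · intro j
    dsimp only
    split_ifs with h
    · simpa using sq_nonneg (x j)
    · exact le_rfl

  · funext j
    have := h5 j
    simp only [Pi.add_apply]
    linarith

lemma dot_swap {n m : ℕ} (B : Matrix (Fin n) (Fin m) ℝ) (u : Fin n → ℝ) (w : Fin m → ℝ) :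
    ∑ i, u i * B.mulVec w i = ∑ j, B.transpose.mulVec u j * w j := by
  simp only [Matrix.mulVec, dotProduct, Matrix.transpose_apply, Finset.mul_sum,
    Finset.sum_mul]
  rw [Finset.sum_comm]
  apply Finset.sum_congr rfl; intro i _
  apply Finset.sum_congr rfl; intro j _
  ring

lemma card_image_cons {k : ℕ} (h : Fin k → ℤ) (f : Fin k → List ℤ) {Kz : ℤ}
    (hK : ∀ i, |h i| ≤ Kz) :
    (Finset.univ.image (fun i => h i :: f i)).card
      ≤ (Finset.Icc (-Kz) Kz).card * (Finset.univ.image f).card := by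
  classical
  calc (Finset.univ.image (fun i => h i :: f i)).card
      ≤ (((Finset.Icc (-Kz) Kz) ×ˢ (Finset.univ.image f)).image
          (fun p : ℤ × List ℤ => p.1 :: p.2)).card := by
        apply Finset.card_le_card
        intro l hl
        obtain ⟨i, -, rfl⟩ := Finset.mem_image.mp hl
        apply Finset.mem_image.mpr
        refine ⟨(h i, f i), ?_, rfl⟩
        apply Finset.mem_product.mpr
        exact ⟨Finset.mem_Icc.mpr (abs_le.mp (hK i)), Finset.mem_image_of_mem f (Finset.mem_univ i)⟩
    _ ≤ ((Finset.Icc (-Kz) Kz) ×ˢ (Finset.univ.image f)).card := Finset.card_image_le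
    _ = (Finset.Icc (-Kz) Kz).card * (Finset.univ.image f).card := Finset.card_product _ _

lemma Icc_card_le {γ : ℝ} (hγ0 : 0 < γ) (hγ1 : γ < 1) :
    (((Finset.Icc (-⌊(2:ℝ)/γ^2⌋) ⌊(2:ℝ)/γ^2⌋).card : ℕ) : ℝ) ≤ 5 / γ ^ 2 := by
  have hKnn : (0:ℤ) ≤ ⌊(2:ℝ)/γ^2⌋ := Int.floor_nonneg.mpr (by positivity)
  have hKle : ((⌊(2:ℝ)/γ^2⌋ : ℤ) : ℝ) ≤ 2 / γ ^ 2 := Int.floor_le _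
  rw [Int.card_Icc]
  have h1 : (⌊(2:ℝ)/γ^2⌋ + 1 - -⌊(2:ℝ)/γ^2⌋) = 2*⌊(2:ℝ)/γ^2⌋ + 1 := by ring
  rw [h1]
  have h2 : (((2*⌊(2:ℝ)/γ^2⌋ + 1).toNat : ℕ) : ℝ) = 2*((⌊(2:ℝ)/γ^2⌋ : ℤ) : ℝ) + 1 := by
    have h3 : ((2*⌊(2:ℝ)/γ^2⌋ + 1).toNat : ℤ) = 2*⌊(2:ℝ)/γ^2⌋ + 1 :=
      Int.toNat_of_nonneg (by linarith)
    have h4 : (((2*⌊(2:ℝ)/γ^2⌋ + 1).toNat : ℕ) : ℝ) = (((2*⌊(2:ℝ)/γ^2⌋ + 1).toNat : ℤ) : ℝ) := by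
      push_cast
      ring
    rw [h4, h3]
    push_cast
    ring
  rw [h2]
  have hγ2 : (0:ℝ) < γ ^ 2 := by positivity
  rw [le_div_iff₀ hγ2]
  rw [le_div_iff₀ hγ2] at hKle
  nlinarith

lemma sum_sq_restricted {n m : ℕ} (B : Matrix (Fin n) (Fin m) ℝ) (t : Finset (Fin m))
    {b : ℝ} (hB : ∀ i j, |B i j| ≤ b) :
    ∑ i, ∑ j ∈ t, B i j ^ 2 ≤ (n : ℝ) * t.card * b ^ 2 := by
  calc ∑ i, ∑ j ∈ t, B i j ^ 2 ≤ ∑ _i : Fin n, ∑ _j ∈ t, b ^ 2 := by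
        apply Finset.sum_le_sum; intro i _
        apply Finset.sum_le_sum; intro j _
        calc B i j ^ 2 = |B i j| ^ 2 := (sq_abs _).symm
          _ ≤ b ^ 2 := pow_le_pow_left₀ (abs_nonneg _) (hB i j) 2
    _ = (n : ℝ) * t.card * b ^ 2 := by
        simp [Finset.sum_const, nsmul_eq_mul]; ring

end SD

namespace SD
open Finset

lemma step {n m : ℕ} {A : Matrix (Fin n) (Fin m) ℝ} {L γ : ℝ} (hL : 0 < L)
    (hA : ∀ i j, |A i j| ≤ L) (hγ0 : 0 < γ) (hγ1 : γ < 1)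
    (f : Fin n → List ℤ) (g : Fin m → List ℤ)
    (hnot : ¬ ∀ v : Fin m → ℝ, enorm2 v ≤ 1 →
      enorm2 ((A - CE A f g).mulVec v) ≤ 7 * γ * Real.sqrt ((n:ℝ) * m) * L) :
    0 < Real.sqrt ((n:ℝ) * m) ∧
    ∃ f' : Fin n → List ℤ, ∃ g' : Fin m → List ℤ,
      Refines f' f ∧ Refines g' g ∧
      ((univ.image f').card : ℝ) ≤ 5 / γ ^ 2 * (univ.image f).card ∧
      ((univ.image g').card : ℝ) ≤ 5 / γ ^ 2 * (univ.image g).card ∧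
      frob (CE A f g) + (γ * Real.sqrt ((n:ℝ) * m) * L) ^ 2 ≤ frob (CE A f' g') := by
  classical
  push_neg at hnot
  obtain ⟨x, hx1, hx2⟩ := hnot
  set B := A - CE A f g with hBdef
  set N := Real.sqrt ((n:ℝ) * m) with hNdef
  have hNnn : 0 ≤ N := Real.sqrt_nonneg _
  -- positivity of the norm of B x
  have hw_pos : 0 < enorm2 (B.mulVec x) :=
    lt_of_le_of_lt (by positivity) hx2
  -- n and m are positive
  have hm : 0 < m := by
    by_contra h
    push_neg at h
    interval_cases m
    have : B.mulVec x = fun _ => 0 := by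
      funext i; simp [Matrix.mulVec, dotProduct]
    rw [this] at hw_pos
    simp [enorm2] at hw_pos
  have hn : 0 < n := by
    by_contra h
    push_neg at h
    interval_cases n
    simp [enorm2] at hw_pos
  have hN2 : N ^ 2 = (n : ℝ) * m := Real.sq_sqrt (by positivity)
  have hNpos : 0 < N := Real.sqrt_pos.mpr (by
    have h1 : (0:ℝ) < (n:ℝ) := by exact_mod_cast hn
    have h2 : (0:ℝ) < (m:ℝ) := by exact_mod_cast hm
    positivity)
  have hNsplit : N = Real.sqrt n * Real.sqrt m := Real.sqrt_mul (by positivity) _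
  -- entry bound on B
  have hB : ∀ i j, |B i j| ≤ 2 * L := by
    intro i j
    have h1 := abs_CE_le hA f g i j
    have h2 := hA i j
    calc |B i j| = |A i j - CE A f g i j| := by rw [hBdef]; rfl
      _ ≤ |A i j| + |CE A f g i j| := abs_sub _ _
      _ ≤ 2 * L := by linarith
  -- global Frobenius bound on B
  have hfrobB : ∑ i, ∑ j ∈ (univ : Finset (Fin m)), B i j ^ 2 ≤ (2 * N * L) ^ 2 := by
    calc ∑ i, ∑ j ∈ (univ : Finset (Fin m)), B i j ^ 2
        ≤ (n : ℝ) * (univ : Finset (Fin m)).card * (2 * L) ^ 2 :=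
          sum_sq_restricted B univ hB
      _ = (2 * N * L) ^ 2 := by
          rw [Finset.card_univ, Fintype.card_fin]
          have : (2 * N * L) ^ 2 = 4 * N ^ 2 * L ^ 2 := by ring
          rw [this, hN2]; ring
  -- the vector x, and the normalized image vector y
  have hxsum : ∑ j, x j ^ 2 ≤ 1 := by
    have := sq_enorm2 x
    nlinarith [enorm2_nonneg x]
  set c := enorm2 (B.mulVec x) with hcdef
  set y : Fin n → ℝ := fun i => B.mulVec x i / c with hydef
  have hysum : ∑ i, y i ^ 2 ≤ 1 := by
    have h1 : ∑ i, y i ^ 2 = (∑ i, B.mulVec x i ^ 2) / c ^ 2 := by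
      rw [Finset.sum_div]
      apply Finset.sum_congr rfl
      intro i _
      rw [hydef, div_pow]
    rw [h1, ← sq_enorm2 (B.mulVec x), ← hcdef, div_self (by positivity)]
  have hydot : ∑ i, y i * B.mulVec x i = c := by
    have h1 : ∑ i, y i * B.mulVec x i = (∑ i, B.mulVec x i ^ 2) / c := by
      rw [Finset.sum_div]
      apply Finset.sum_congr rfl
      intro i _
      rw [hydef]; ring
    rw [h1, ← sq_enorm2 (B.mulVec x), ← hcdef]
    field_simp [pow_two]
  -- round x and y
  obtain ⟨kx, xt, rx, sx, hxt_eq, hkx_bd, hxt_sum, hrx_sum, ⟨tx, htx_supp, htx_card⟩,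
    hsx_sq, hx_dec⟩ := round_vec' hm hγ0 x hxsum
  obtain ⟨ky, yt, ry, sy, hyt_eq, hky_bd, hyt_sum, hry_sum, ⟨ty, hty_supp, hty_card⟩,
    hsy_sq, hy_dec⟩ := round_vec' hn hγ0 y hysum
  -- basic norm facts
  have hy1 : enorm2 y ≤ 1 := enorm2_le_one hysum
  have hxt1s : ∑ j, xt j ^ 2 ≤ 1 := hxt_sum.trans hxsum
  have hyt1s : ∑ i, yt i ^ 2 ≤ 1 := hyt_sum.trans hysum
  have hxt1 : enorm2 xt ≤ 1 := enorm2_le_one hxt1s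
  have hyt1 : enorm2 yt ≤ 1 := enorm2_le_one hyt1s
  have hrxn : enorm2 rx ≤ γ := by
    calc enorm2 rx ≤ Real.sqrt (γ ^ 2) := enorm2_le_sqrt hrx_sum
      _ = γ := Real.sqrt_sq hγ0.le
  have hryn : enorm2 ry ≤ γ := by
    calc enorm2 ry ≤ Real.sqrt (γ ^ 2) := enorm2_le_sqrt hry_sum
      _ = γ := Real.sqrt_sq hγ0.le
  have hsxn : enorm2 sx ≤ 1 := enorm2_le_one ((Finset.sum_le_sum
    (fun j _ => hsx_sq j)).trans hxsum)
  have hsyn : enorm2 sy ≤ 1 := enorm2_le_one ((Finset.sum_le_sum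
    (fun i _ => hsy_sq i)).trans hysum)
  have hNL : 0 ≤ 2 * N * L := by positivity
  have hγNL : 0 ≤ γ * N * L := by positivity
  -- spectral-type bounds
  have hBfull : ∀ v : Fin m → ℝ, enorm2 (B.mulVec v) ≤ 2 * N * L * enorm2 v := by
    intro v
    exact enorm2_mulVec_le B univ v (fun j hj => (hj (Finset.mem_univ j)).elim) hNL hfrobB
  have hBsx : enorm2 (B.mulVec sx) ≤ γ * N * L := by
    have hrest : ∑ i, ∑ j ∈ tx, B i j ^ 2 ≤ (γ * N * L) ^ 2 := by
      calc ∑ i, ∑ j ∈ tx, B i j ^ 2 ≤ (n : ℝ) * tx.card * (2 * L) ^ 2 :=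
            sum_sq_restricted B tx hB
        _ ≤ (n : ℝ) * (γ ^ 2 * m / 4) * (2 * L) ^ 2 := by
            apply mul_le_mul_of_nonneg_right _ (by positivity)
            apply mul_le_mul_of_nonneg_left htx_card (by positivity)
        _ = (γ * N * L) ^ 2 := by
            have : (γ * N * L) ^ 2 = γ ^ 2 * N ^ 2 * L ^ 2 := by ring
            rw [this, hN2]; ring
    calc enorm2 (B.mulVec sx) ≤ γ * N * L * enorm2 sx :=
          enorm2_mulVec_le B tx sx htx_supp hγNL hrest
      _ ≤ γ * N * L * 1 := mul_le_mul_of_nonneg_left hsxn hγNL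
      _ = γ * N * L := mul_one _
  have hBtsy : enorm2 (B.transpose.mulVec sy) ≤ γ * N * L := by
    have hrest : ∑ j, ∑ i ∈ ty, B.transpose j i ^ 2 ≤ (γ * N * L) ^ 2 := by
      calc ∑ j, ∑ i ∈ ty, B.transpose j i ^ 2 ≤ (m : ℝ) * ty.card * (2 * L) ^ 2 :=
            sum_sq_restricted B.transpose ty (fun j i => hB i j)
        _ ≤ (m : ℝ) * (γ ^ 2 * n / 4) * (2 * L) ^ 2 := by
            apply mul_le_mul_of_nonneg_right _ (by positivity)
            apply mul_le_mul_of_nonneg_left hty_card (by positivity)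
        _ = (γ * N * L) ^ 2 := by
            have : (γ * N * L) ^ 2 = γ ^ 2 * N ^ 2 * L ^ 2 := by ring
            rw [this, hN2]; ring
    calc enorm2 (B.transpose.mulVec sy) ≤ γ * N * L * enorm2 sy :=
          enorm2_mulVec_le B.transpose ty sy hty_supp hγNL hrest
      _ ≤ γ * N * L * 1 := mul_le_mul_of_nonneg_left hsyn hγNL
      _ = γ * N * L := mul_one _
  -- step 1 : replace x by xt
  have hmulx : B.mulVec x = B.mulVec xt + B.mulVec rx + B.mulVec sx := by
    rw [hx_dec, Matrix.mulVec_add, Matrix.mulVec_add]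
  have hsplit1 : ∑ i, y i * B.mulVec x i
      = ∑ i, y i * B.mulVec xt i + ∑ i, y i * B.mulVec rx i + ∑ i, y i * B.mulVec sx i := by
    rw [hmulx]
    simp only [Pi.add_apply, mul_add, Finset.sum_add_distrib]
  have habs2 : |∑ i, y i * B.mulVec rx i| ≤ 2 * N * L * γ := by
    calc |∑ i, y i * B.mulVec rx i| ≤ enorm2 y * enorm2 (B.mulVec rx) := abs_dot_le _ _
      _ ≤ 1 * (2 * N * L * γ) := by
          apply mul_le_mul hy1 _ (enorm2_nonneg _) zero_le_one
          calc enorm2 (B.mulVec rx) ≤ 2 * N * L * enorm2 rx := hBfull rx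
            _ ≤ 2 * N * L * γ := mul_le_mul_of_nonneg_left hrxn hNL
      _ = 2 * N * L * γ := one_mul _
  have habs3 : |∑ i, y i * B.mulVec sx i| ≤ γ * N * L := by
    calc |∑ i, y i * B.mulVec sx i| ≤ enorm2 y * enorm2 (B.mulVec sx) := abs_dot_le _ _
      _ ≤ 1 * (γ * N * L) := mul_le_mul hy1 hBsx (enorm2_nonneg _) zero_le_one
      _ = γ * N * L := one_mul _
  have hstep1 : 4 * (γ * N * L) < ∑ i, y i * B.mulVec xt i := by
    have := hydot
    rw [hsplit1] at this
    have h2 := abs_le.mp habs2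
    have h3 := abs_le.mp habs3
    have hc7 : 7 * γ * N * L < c := hx2
    have e1 : 2 * N * L * γ = 2 * (γ * N * L) := by ring
    have e2 : 7 * γ * N * L = 7 * (γ * N * L) := by ring
    linarith [h2.1, h3.1]
  -- step 2 : replace y by yt
  have hsplit2 : ∑ i, y i * B.mulVec xt i
      = ∑ i, yt i * B.mulVec xt i + ∑ i, ry i * B.mulVec xt i
        + ∑ i, sy i * B.mulVec xt i := by
    rw [hy_dec]
    simp only [Pi.add_apply, add_mul, Finset.sum_add_distrib]
  have habs4 : |∑ i, ry i * B.mulVec xt i| ≤ γ * (2 * N * L) := by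
    calc |∑ i, ry i * B.mulVec xt i| ≤ enorm2 ry * enorm2 (B.mulVec xt) := abs_dot_le _ _
      _ ≤ γ * (2 * N * L) := by
          apply mul_le_mul hryn _ (enorm2_nonneg _) hγ0.le
          calc enorm2 (B.mulVec xt) ≤ 2 * N * L * enorm2 xt := hBfull xt
            _ ≤ 2 * N * L * 1 := mul_le_mul_of_nonneg_left hxt1 hNL
            _ = 2 * N * L := mul_one _
  have habs5 : |∑ i, sy i * B.mulVec xt i| ≤ γ * N * L := by
    rw [dot_swap]
    calc |∑ j, B.transpose.mulVec sy j * xt j|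
        ≤ enorm2 (B.transpose.mulVec sy) * enorm2 xt := abs_dot_le _ _
      _ ≤ γ * N * L * 1 := mul_le_mul hBtsy hxt1 (enorm2_nonneg _) hγNL
      _ = γ * N * L := mul_one _
  have hkey : γ * N * L ≤ ∑ i, yt i * B.mulVec xt i := by
    have h4 := abs_le.mp habs4
    have h5 := abs_le.mp habs5
    rw [hsplit2] at hstep1
    have e1 : γ * (2 * N * L) = 2 * (γ * N * L) := by ring
    linarith [h4.1, h5.1]
  -- the rank one block matrix M
  set M : Matrix (Fin n) (Fin m) ℝ := fun i j => yt i * xt j with hMdef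
  have hipBM : ip B M = ∑ i, yt i * B.mulVec xt i := by
    rw [ip]
    apply Finset.sum_congr rfl
    intro i _
    rw [Matrix.mulVec, dotProduct, Finset.mul_sum]
    apply Finset.sum_congr rfl
    intro j _
    rw [hMdef]
    ring
  have hfrobM : frob M ≤ 1 := by
    have hexp : frob M = (∑ i, yt i ^ 2) * ∑ j, xt j ^ 2 := by
      rw [frob, Finset.sum_mul_sum]
      apply Finset.sum_congr rfl; intro i _
      apply Finset.sum_congr rfl; intro j _
      rw [hMdef]; ring
    rw [hexp]
    apply mul_le_one₀ hyt1s (Finset.sum_nonneg (fun j _ => sq_nonneg _)) hxt1s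
  -- refinement
  set f' : Fin n → List ℤ := fun i => ky i :: f i with hf'def
  set g' : Fin m → List ℤ := fun j => kx j :: g j with hg'def
  have hfref : Refines f' f := by
    intro i i' h
    rw [hf'def] at h
    exact (List.cons.inj h).2
  have hgref : Refines g' g := by
    intro j j' h
    rw [hg'def] at h
    exact (List.cons.inj h).2
  have hMblk : IsBlock f' g' M := by
    intro i i' j j' h1 h2
    have hky : ky i = ky i' := (List.cons.inj h1).1
    have hkx : kx j = kx j' := (List.cons.inj h2).1
    rw [hMdef]
    simp only
    rw [hyt_eq, hyt_eq, hxt_eq, hxt_eq, hky, hkx]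
  -- energy increment
  have hipD : γ * N * L ≤ ip (CE A f' g' - CE A f g) M := by
    rw [ip_D_eq A hfref hgref hMblk, ← hBdef, hipBM]
    exact hkey
  have hfrobD : (γ * N * L) ^ 2 ≤ frob (CE A f' g' - CE A f g) := by
    have h1 : (γ * N * L) ^ 2 ≤ (ip (CE A f' g' - CE A f g) M) ^ 2 :=
      pow_le_pow_left₀ hγNL hipD 2
    have h2 := ip_CS (CE A f' g' - CE A f g) M
    have h3 : frob (CE A f' g' - CE A f g) * frob M
        ≤ frob (CE A f' g' - CE A f g) * 1 :=
      mul_le_mul_of_nonneg_left hfrobM (frob_nonneg _)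
    rw [mul_one] at h3
    linarith
  refine ⟨hNpos, f', g', hfref, hgref, ?_, ?_, ?_⟩
  · -- card bound for f'
    have hKz : ∀ i, |ky i| ≤ ⌊(2:ℝ) / γ ^ 2⌋ := by
      intro i
      rw [Int.le_floor]
      push_cast
      exact hky_bd i
    have hcard := card_image_cons ky f hKz
    calc ((univ.image f').card : ℝ)
        ≤ ((Finset.Icc (-⌊(2:ℝ)/γ^2⌋) ⌊(2:ℝ)/γ^2⌋).card : ℝ) * ((univ.image f).card : ℝ) := by
          exact_mod_cast hcard
      _ ≤ 5 / γ ^ 2 * ((univ.image f).card : ℝ) :=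
          mul_le_mul_of_nonneg_right (Icc_card_le hγ0 hγ1) (Nat.cast_nonneg _)
  · -- card bound for g'
    have hKz : ∀ j, |kx j| ≤ ⌊(2:ℝ) / γ ^ 2⌋ := by
      intro j
      rw [Int.le_floor]
      push_cast
      exact hkx_bd j
    have hcard := card_image_cons kx g hKz
    calc ((univ.image g').card : ℝ)
        ≤ ((Finset.Icc (-⌊(2:ℝ)/γ^2⌋) ⌊(2:ℝ)/γ^2⌋).card : ℝ) * ((univ.image g).card : ℝ) := by
          exact_mod_cast hcard
      _ ≤ 5 / γ ^ 2 * ((univ.image g).card : ℝ) :=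
          mul_le_mul_of_nonneg_right (Icc_card_le hγ0 hγ1) (Nat.cast_nonneg _)
  · rw [frob_CE_add A hfref hgref]
    linarith

end SD

namespace SD
open Finset

lemma refines_trans {k : ℕ} {f2 f1 f0 : Fin k → List ℤ} (h21 : Refines f2 f1)
    (h10 : Refines f1 f0) : Refines f2 f0 :=
  fun i i' h => h10 i i' (h21 i i' h)

lemma peel {n m : ℕ} {A : Matrix (Fin n) (Fin m) ℝ} {L γ : ℝ} (hL : 0 < L)
    (hA : ∀ i j, |A i j| ≤ L) (hγ0 : 0 < γ) (hγ1 : γ < 1) :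
    ∀ (k : ℕ) (f : Fin n → List ℤ) (g : Fin m → List ℤ),
      ((n:ℝ) * m * L ^ 2 ≤ frob (CE A f g) + k * (γ * Real.sqrt ((n:ℝ)*m) * L) ^ 2) →
      ∃ f' g',
        ((univ.image f').card : ℝ) ≤ (5/γ^2) ^ k * (univ.image f).card ∧
        ((univ.image g').card : ℝ) ≤ (5/γ^2) ^ k * (univ.image g).card ∧
        ∀ v : Fin m → ℝ, enorm2 v ≤ 1 →
          enorm2 ((A - CE A f' g').mulVec v) ≤ 7 * γ * Real.sqrt ((n:ℝ)*m) * L := by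
  have hbase : (1:ℝ) ≤ 5/γ^2 := by
    rw [le_div_iff₀ (by positivity)]
    nlinarith
  intro k
  induction k with
  | zero =>
    intro f g hbud
    by_cases hdone : ∀ v : Fin m → ℝ, enorm2 v ≤ 1 →
        enorm2 ((A - CE A f g).mulVec v) ≤ 7 * γ * Real.sqrt ((n:ℝ)*m) * L
    · exact ⟨f, g, by simpa using le_refl _, by simpa using le_refl _, hdone⟩
    · exfalso
      obtain ⟨hNpos, f1, g1, -, -, -, -, hen⟩ := step hL hA hγ0 hγ1 f g hdone
      have h1 : frob (CE A f1 g1) ≤ frob A := frob_CE_le A f1 g1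
      have h2 : frob A ≤ (n:ℝ) * m * L ^ 2 := by
        have := sum_sq_restricted A univ hA
        rw [Finset.card_univ, Fintype.card_fin] at this
        exact this
      have h3 : (0:ℝ) < (γ * Real.sqrt ((n:ℝ)*m) * L) ^ 2 := by positivity
      simp only [Nat.cast_zero, zero_mul, add_zero] at hbud
      linarith
  | succ k ih =>
    intro f g hbud
    by_cases hdone : ∀ v : Fin m → ℝ, enorm2 v ≤ 1 →
        enorm2 ((A - CE A f g).mulVec v) ≤ 7 * γ * Real.sqrt ((n:ℝ)*m) * L
    · refine ⟨f, g, ?_, ?_, hdone⟩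
      · calc ((univ.image f).card : ℝ) = 1 * (univ.image f).card := (one_mul _).symm
          _ ≤ (5/γ^2) ^ (k+1) * (univ.image f).card :=
            mul_le_mul_of_nonneg_right (one_le_pow₀ hbase) (Nat.cast_nonneg _)
      · calc ((univ.image g).card : ℝ) = 1 * (univ.image g).card := (one_mul _).symm
          _ ≤ (5/γ^2) ^ (k+1) * (univ.image g).card :=
            mul_le_mul_of_nonneg_right (one_le_pow₀ hbase) (Nat.cast_nonneg _)
    · obtain ⟨hNpos, f1, g1, hrf, hrg, hcf, hcg, hen⟩ := step hL hA hγ0 hγ1 f g hdone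
      have hbud1 : (n:ℝ) * m * L ^ 2
          ≤ frob (CE A f1 g1) + k * (γ * Real.sqrt ((n:ℝ)*m) * L) ^ 2 := by
        push_cast at hbud ⊢
        linarith
      obtain ⟨f', g', hcf', hcg', hdone'⟩ := ih f1 g1 hbud1
      refine ⟨f', g', ?_, ?_, hdone'⟩
      · calc ((univ.image f').card : ℝ) ≤ (5/γ^2) ^ k * (univ.image f1).card := hcf'
          _ ≤ (5/γ^2) ^ k * (5 / γ ^ 2 * (univ.image f).card) :=
            mul_le_mul_of_nonneg_left hcf (by positivity)
          _ = (5/γ^2) ^ (k+1) * (univ.image f).card := by ring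
      · calc ((univ.image g').card : ℝ) ≤ (5/γ^2) ^ k * (univ.image g1).card := hcg'
          _ ≤ (5/γ^2) ^ k * (5 / γ ^ 2 * (univ.image g).card) :=
            mul_le_mul_of_nonneg_left hcg (by positivity)
          _ = (5/γ^2) ^ (k+1) * (univ.image g).card := by ring

end SD

namespace SD
open Finset

lemma count_bound {γ : ℝ} (hγ0 : 0 < γ) (hγ1 : γ < 1) :
    ((5/γ^2) ^ (⌈1/γ^2⌉₊ : ℕ)) ^ 2 ≤ (20:ℝ)^8 * (1/γ^10) ^ ((3:ℝ)/γ^2) := by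
  have hγ2pos : (0:ℝ) < γ^2 := by positivity
  have hγ10 : γ^10 ≤ 1 := pow_le_one₀ hγ0.le hγ1.le
  have h1le : (1:ℝ) ≤ 1/γ^10 := by
    rw [le_div_iff₀ (by positivity)]; linarith
  have hrnn : (0:ℝ) ≤ (1/γ^10) ^ ((3:ℝ)/γ^2) := Real.rpow_nonneg (by positivity) _
  have hone_le_rpow : (1:ℝ) ≤ (1/γ^10) ^ ((3:ℝ)/γ^2) :=
    Real.one_le_rpow h1le (by positivity)
  set k₀ := ⌈1/γ^2⌉₊ with hk₀def
  by_cases hc : γ ≤ 1/2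
  · -- small γ
    have h5 : 5/γ^2 ≤ 1/γ^5 := by
      rw [div_le_div_iff₀ (by positivity) (by positivity)]
      have h3 : γ^3 ≤ (1/2)^3 := pow_le_pow_left₀ hγ0.le hc 3
      nlinarith [sq_nonneg γ, pow_pos hγ0 2, pow_pos hγ0 5]
    have hk₀le : (k₀:ℝ) ≤ 3/γ^2 := by
      have h1 : (k₀:ℝ) < 1/γ^2 + 1 := Nat.ceil_lt_add_one (by positivity)
      have h2 : (1:ℝ) ≤ 2/γ^2 := by
        rw [le_div_iff₀ hγ2pos]; nlinarith
      have h3 : (3:ℝ)/γ^2 = 1/γ^2 + 2/γ^2 := by ring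
      linarith
    calc ((5/γ^2) ^ k₀) ^ 2 = (5/γ^2) ^ (k₀ * 2) := by rw [pow_mul]
      _ ≤ (1/γ^5) ^ (k₀ * 2) := pow_le_pow_left₀ (by positivity) h5 _
      _ = ((1/γ^5) ^ 2) ^ k₀ := by rw [← pow_mul, mul_comm k₀ 2, pow_mul]
      _ = (1/γ^10) ^ k₀ := by
          congr 1
          rw [div_pow, ← pow_mul]
          norm_num
      _ = (1/γ^10) ^ ((k₀:ℕ):ℝ) := (Real.rpow_natCast _ k₀).symm
      _ ≤ (1/γ^10) ^ ((3:ℝ)/γ^2) := Real.rpow_le_rpow_of_exponent_le h1le hk₀le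
      _ ≤ (20:ℝ)^8 * (1/γ^10) ^ ((3:ℝ)/γ^2) := le_mul_of_one_le_left hrnn (by norm_num)
  · -- large γ
    push_neg at hc
    have hk₀4 : k₀ ≤ 4 := Nat.ceil_le.mpr (by rw [div_le_iff₀ (by positivity)]; push_cast; nlinarith [sq_nonneg (2*γ-1)])
    have hb20 : 5/γ^2 ≤ 20 := by rw [div_le_iff₀ hγ2pos]; nlinarith
    have hX : (5/γ^2) ^ k₀ ≤ (20:ℝ)^4 := by
      calc (5/γ^2) ^ k₀ ≤ (20:ℝ) ^ k₀ := pow_le_pow_left₀ (by positivity) hb20 _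
        _ ≤ (20:ℝ)^4 := pow_le_pow_right₀ (by norm_num) hk₀4
    calc ((5/γ^2) ^ k₀) ^ 2 ≤ ((20:ℝ)^4) ^ 2 := pow_le_pow_left₀ (by positivity) hX 2
      _ = (20:ℝ)^8 := by norm_num
      _ = (20:ℝ)^8 * 1 := (mul_one _).symm
      _ ≤ (20:ℝ)^8 * (1/γ^10) ^ ((3:ℝ)/γ^2) :=
          mul_le_mul_of_nonneg_left hone_le_rpow (by norm_num)

end SD

/-- The spectral norm (largest singular value) of a real matrix:
`sup_{‖v‖₂ ≤ 1} ‖Av‖₂`. -/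
noncomputable def specNorm {n m : ℕ} (A : Matrix (Fin n) (Fin m) ℝ) : ℝ :=
  sSup {c : ℝ | ∃ v : Fin m → ℝ, enorm2 v ≤ 1 ∧ c = enorm2 (A.mulVec v)}

/-- **Spectral decomposition theorem.** There is an absolute constant `C > 0` such
that every matrix `A ∈ [−L,L]^{n×m}` can be decomposed, for any `γ ∈ (0,1)`, as
`A = A^str + A^psd` where `A^str` is a block matrix with at most
`C·(1/γ^10)^(3/γ²)` blocks (constant on each block), `‖A^psd‖₂ ≤ 7γ√(nm)L`,
and `‖A^str‖_max ≤ (2/γ^11)·L`. -/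
theorem spectral_decomposition :
    ∃ C : ℝ, 0 < C ∧
      ∀ (n m : ℕ) (L : ℝ), 0 < L →
        ∀ A : Matrix (Fin n) (Fin m) ℝ, (∀ i j, |A i j| ≤ L) →
          ∀ γ : ℝ, γ ∈ Set.Ioo (0:ℝ) 1 →
            ∃ Astr Apsd : Matrix (Fin n) (Fin m) ℝ,
              A = Astr + Apsd ∧
              (∃ p q : ℕ, ((p * q : ℕ) : ℝ) ≤ C * (1 / γ ^ 10) ^ ((3:ℝ) / γ ^ 2) ∧
                ∃ (f : Fin n → Fin p) (g : Fin m → Fin q),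
                  ∀ i i' j j', f i = f i' → g j = g j' → Astr i j = Astr i' j') ∧
              specNorm Apsd ≤ 7 * γ * Real.sqrt (n * m) * L ∧
              (∀ i j, |Astr i j| ≤ (2 / γ ^ 11) * L) := by
  classical
  refine ⟨(20:ℝ)^8, by norm_num, ?_⟩
  intro n m L hL A hA γ hγ
  obtain ⟨hγ0, hγ1⟩ := hγ
  set k₀ := ⌈1/γ^2⌉₊ with hk₀def
  have hN2 : (Real.sqrt ((n:ℝ)*m))^2 = (n:ℝ)*m := Real.sq_sqrt (by positivity)
  have hbud : (n:ℝ) * m * L ^ 2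
      ≤ SD.frob (SD.CE A (fun _ => ([]:List ℤ)) (fun _ => ([]:List ℤ)))
        + k₀ * (γ * Real.sqrt ((n:ℝ)*m) * L) ^ 2 := by
    have hk : 1/γ^2 ≤ (k₀:ℝ) := Nat.le_ceil _
    have hk1 : 1 ≤ (k₀:ℝ) * γ^2 := by
      rw [div_le_iff₀ (by positivity)] at hk
      linarith
    have he : (γ * Real.sqrt ((n:ℝ)*m) * L)^2 = γ^2 * ((n:ℝ)*m) * L^2 := by
      rw [mul_pow, mul_pow, hN2]
    have hfr := SD.frob_nonneg (SD.CE A (fun _ => ([]:List ℤ)) (fun _ => ([]:List ℤ)))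
    have hnm : (0:ℝ) ≤ (n:ℝ)*m*L^2 := by positivity
    rw [he]
    nlinarith [mul_le_mul_of_nonneg_right hk1 hnm]
  obtain ⟨ff, gg, hcf, hcg, hdone⟩ := SD.peel hL hA hγ0 hγ1 k₀ _ _ hbud
  set Astr := SD.CE A ff gg with hAstr
  refine ⟨Astr, A - Astr, by ext i j; simp, ?_, ?_, ?_⟩
  · -- block structure and counting
    set p := (Finset.univ.image ff).card with hp
    set q := (Finset.univ.image gg).card with hq
    refine ⟨p, q, ?_, ?_⟩
    · have hconstf : ((Finset.univ.image (fun _ : Fin n => ([]:List ℤ))).card : ℝ) ≤ 1 := by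
        have := Finset.card_le_one.mpr
          (fun a (ha : a ∈ Finset.univ.image (fun _ : Fin n => ([]:List ℤ))) b hb => by
            obtain ⟨i, -, rfl⟩ := Finset.mem_image.mp ha
            obtain ⟨j, -, rfl⟩ := Finset.mem_image.mp hb
            rfl)
        exact_mod_cast this
      have hconstg : ((Finset.univ.image (fun _ : Fin m => ([]:List ℤ))).card : ℝ) ≤ 1 := by
        have := Finset.card_le_one.mpr
          (fun a (ha : a ∈ Finset.univ.image (fun _ : Fin m => ([]:List ℤ))) b hb => by
            obtain ⟨i, -, rfl⟩ := Finset.mem_image.mp ha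
            obtain ⟨j, -, rfl⟩ := Finset.mem_image.mp hb
            rfl)
        exact_mod_cast this
      have hpow : (0:ℝ) ≤ (5/γ^2) ^ k₀ := by positivity
      have hpb : (p:ℝ) ≤ (5/γ^2) ^ k₀ := by
        calc (p:ℝ) ≤ (5/γ^2) ^ k₀ * ((Finset.univ.image (fun _ : Fin n => ([]:List ℤ))).card : ℝ) := hcf
          _ ≤ (5/γ^2) ^ k₀ * 1 := mul_le_mul_of_nonneg_left hconstf hpow
          _ = (5/γ^2) ^ k₀ := mul_one _
      have hqb : (q:ℝ) ≤ (5/γ^2) ^ k₀ := by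
        calc (q:ℝ) ≤ (5/γ^2) ^ k₀ * ((Finset.univ.image (fun _ : Fin m => ([]:List ℤ))).card : ℝ) := hcg
          _ ≤ (5/γ^2) ^ k₀ * 1 := mul_le_mul_of_nonneg_left hconstg hpow
          _ = (5/γ^2) ^ k₀ := mul_one _
      calc ((p * q : ℕ) : ℝ) = (p:ℝ) * (q:ℝ) := by push_cast; ring
        _ ≤ (5/γ^2) ^ k₀ * (5/γ^2) ^ k₀ :=
            mul_le_mul hpb hqb (Nat.cast_nonneg _) hpow
        _ = ((5/γ^2) ^ k₀) ^ 2 := by ring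
        _ ≤ (20:ℝ)^8 * (1/γ^10) ^ ((3:ℝ)/γ^2) := SD.count_bound hγ0 hγ1
    · refine ⟨fun i => (Finset.univ.image ff).equivFin ⟨ff i, Finset.mem_image_of_mem ff (Finset.mem_univ i)⟩,
        fun j => (Finset.univ.image gg).equivFin ⟨gg j, Finset.mem_image_of_mem gg (Finset.mem_univ j)⟩,
        ?_⟩
      intro i i' j j' hfi hgj
      have h1 : ff i = ff i' := by
        have := (Finset.univ.image ff).equivFin.injective hfi
        exact congrArg Subtype.val this
      have h2 : gg j = gg j' := by
        have := (Finset.univ.image gg).equivFin.injective hgj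
        exact congrArg Subtype.val this
      exact SD.CE_isBlock A ff gg i i' j j' h1 h2
  · -- spectral norm bound
    apply Real.sSup_le
    · rintro c ⟨v, hv, rfl⟩
      have h := hdone v hv
      have hcast : ((n:ℝ) * m) = ((n:ℝ) * (m:ℝ)) := by push_cast; ring
      convert h using 3
    · positivity
  · -- entry bound
    intro i j
    have h1 : |Astr i j| ≤ L := SD.abs_CE_le hA ff gg i j
    have h2 : (1:ℝ) ≤ 2/γ^11 := by
      rw [le_div_iff₀ (by positivity)]
      have := pow_le_one₀ hγ0.le hγ1.le (n := 11)
      linarith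
    calc |Astr i j| ≤ L := h1
      _ = 1 * L := (one_mul _).symm
      _ ≤ (2/γ^11) * L := mul_le_mul_of_nonneg_right h2 hL.le
end

section
/- Let L > 0, γ ∈ (0,1), A ∈ [−L,L]^{n×m}, and N = √(nm). Fix a singular value decomposition A = Σ_ℓ σ_ℓ u^ℓ (v^ℓ)ᵀ, and let A' = Σ_{ℓ : σ_ℓ ≥ γNL} σ_ℓ u^ℓ (v^ℓ)ᵀ be the truncation of the decomposition to the singular values that are at least γNL. Then ‖A'‖_max ≤ L/γ³. -/
open MeasureTheory
open scoped ENNReal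

/-- Expansion of row/column squared norms using an orthonormal family. -/
lemma svd_aux_expand {k p : ℕ} (w : Fin k → Fin p → ℝ)
    (hw : ∀ ℓ ℓ', (∑ x, w ℓ x * w ℓ' x) = if ℓ = ℓ' then 1 else 0)
    (c : Fin k → ℝ) :
    ∑ x, (∑ ℓ, c ℓ * w ℓ x) ^ 2 = ∑ ℓ, (c ℓ) ^ 2 := by
  have h1 : ∀ x, (∑ ℓ, c ℓ * w ℓ x) ^ 2
      = ∑ ℓ, ∑ ℓ', c ℓ * c ℓ' * (w ℓ x * w ℓ' x) := by
    intro x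
    rw [sq, Finset.sum_mul_sum]
    exact Finset.sum_congr rfl fun ℓ _ => Finset.sum_congr rfl fun ℓ' _ => by ring
  simp_rw [h1]
  rw [Finset.sum_comm]
  have h2 : ∀ ℓ, ∑ x, ∑ ℓ', c ℓ * c ℓ' * (w ℓ x * w ℓ' x) = c ℓ ^ 2 := by
    intro ℓ
    rw [Finset.sum_comm]
    have h3 : ∀ ℓ', ∑ x, c ℓ * c ℓ' * (w ℓ x * w ℓ' x)
        = c ℓ * c ℓ' * (if ℓ = ℓ' then (1:ℝ) else 0) := by
      intro ℓ'
      rw [← hw ℓ ℓ', Finset.mul_sum]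
    simp_rw [h3]
    simp [sq]
  simp_rw [h2]

/-- **Bound on the max norm of the truncated SVD.** If `A ∈ [−L,L]^{n×m}` has
singular value decomposition `A = Σ_ℓ σ_ℓ u^ℓ (v^ℓ)ᵀ` and
`A' = Σ_{ℓ : σ_ℓ ≥ γ√(nm)L} σ_ℓ u^ℓ (v^ℓ)ᵀ`, then `‖A'‖_max ≤ L/γ³`. -/
theorem maxNorm_truncated_svd (n m : ℕ) (L γ : ℝ) (hL : 0 < L)
    (hγ : γ ∈ Set.Ioo (0:ℝ) 1)
    (A : Matrix (Fin n) (Fin m) ℝ) (hbdd : ∀ i j, |A i j| ≤ L)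
    (σ : Fin (min n m) → ℝ)
    (u : Fin (min n m) → Fin n → ℝ) (v : Fin (min n m) → Fin m → ℝ)
    (hσ : ∀ ℓ, 0 ≤ σ ℓ)
    (hu : ∀ ℓ ℓ', (∑ i, u ℓ i * u ℓ' i) = if ℓ = ℓ' then 1 else 0)
    (hv : ∀ ℓ ℓ', (∑ j, v ℓ j * v ℓ' j) = if ℓ = ℓ' then 1 else 0)
    (hsvd : ∀ i j, A i j = ∑ ℓ, σ ℓ * u ℓ i * v ℓ j)
    (A' : Matrix (Fin n) (Fin m) ℝ)
    (hA' : ∀ i j, A' i j =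
      ∑ ℓ ∈ Finset.univ.filter (fun ℓ => γ * Real.sqrt (n * m) * L ≤ σ ℓ),
        σ ℓ * u ℓ i * v ℓ j) :
    ∀ i j, |A' i j| ≤ L / γ ^ 3 := by
  intro i j
  obtain ⟨hγ0, hγ1⟩ := hγ
  have hn : (0:ℝ) < n := by exact_mod_cast i.pos
  have hm : (0:ℝ) < m := by exact_mod_cast j.pos
  set N : ℝ := Real.sqrt (n * m) with hNdef
  have hN : 0 < N := Real.sqrt_pos.mpr (by positivity)
  have hN2 : N ^ 2 = n * m := Real.sq_sqrt (by positivity)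
  set T : ℝ := γ * N * L with hTdef
  have hT : 0 < T := by positivity
  set S := Finset.univ.filter (fun ℓ => T ≤ σ ℓ) with hSdef
  -- row bound
  have hrow : ∑ ℓ, (σ ℓ * u ℓ i) ^ 2 ≤ m * L ^ 2 := by
    have h1 : ∑ j', (A i j') ^ 2 = ∑ ℓ, (σ ℓ * u ℓ i) ^ 2 := by
      have := svd_aux_expand v hv (fun ℓ => σ ℓ * u ℓ i)
      rw [← this]
      exact Finset.sum_congr rfl fun j' _ => by rw [hsvd i j']
    rw [← h1]
    calc ∑ j', (A i j') ^ 2 ≤ ∑ j' : Fin m, L ^ 2 := by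
          apply Finset.sum_le_sum
          intro j' _
          have := hbdd i j'
          nlinarith [abs_nonneg (A i j'), sq_abs (A i j')]
      _ = m * L ^ 2 := by simp [mul_comm]
  -- column bound
  have hcol : ∑ ℓ, (σ ℓ * v ℓ j) ^ 2 ≤ n * L ^ 2 := by
    have h1 : ∑ i', (A i' j) ^ 2 = ∑ ℓ, (σ ℓ * v ℓ j) ^ 2 := by
      have := svd_aux_expand u hu (fun ℓ => σ ℓ * v ℓ j)
      rw [← this]
      refine Finset.sum_congr rfl fun i' _ => ?_
      rw [hsvd i' j]
      congr 1
      exact Finset.sum_congr rfl fun ℓ _ => by ring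
    rw [← h1]
    calc ∑ i', (A i' j) ^ 2 ≤ ∑ i' : Fin n, L ^ 2 := by
          apply Finset.sum_le_sum
          intro i' _
          have := hbdd i' j
          nlinarith [abs_nonneg (A i' j), sq_abs (A i' j)]
      _ = n * L ^ 2 := by simp [mul_comm]
  -- truncated sums
  have hσS : ∀ ℓ ∈ S, T ≤ σ ℓ := by
    intro ℓ hℓ
    exact (Finset.mem_filter.mp hℓ).2
  have htr_u : ∑ ℓ ∈ S, σ ℓ * (u ℓ i) ^ 2 ≤ m * L ^ 2 / T := by
    rw [le_div_iff₀ hT, Finset.sum_mul]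
    calc ∑ ℓ ∈ S, σ ℓ * u ℓ i ^ 2 * T ≤ ∑ ℓ ∈ S, (σ ℓ * u ℓ i) ^ 2 := by
          apply Finset.sum_le_sum
          intro ℓ hℓ
          have h := hσS ℓ hℓ
          nlinarith [sq_nonneg (u ℓ i), hσ ℓ]
      _ ≤ ∑ ℓ, (σ ℓ * u ℓ i) ^ 2 :=
          Finset.sum_le_sum_of_subset_of_nonneg (Finset.subset_univ S)
            (fun ℓ _ _ => sq_nonneg _)
      _ ≤ m * L ^ 2 := hrow
  have htr_v : ∑ ℓ ∈ S, σ ℓ * (v ℓ j) ^ 2 ≤ n * L ^ 2 / T := by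
    rw [le_div_iff₀ hT, Finset.sum_mul]
    calc ∑ ℓ ∈ S, σ ℓ * v ℓ j ^ 2 * T ≤ ∑ ℓ ∈ S, (σ ℓ * v ℓ j) ^ 2 := by
          apply Finset.sum_le_sum
          intro ℓ hℓ
          have h := hσS ℓ hℓ
          nlinarith [sq_nonneg (v ℓ j), hσ ℓ]
      _ ≤ ∑ ℓ, (σ ℓ * v ℓ j) ^ 2 :=
          Finset.sum_le_sum_of_subset_of_nonneg (Finset.subset_univ S)
            (fun ℓ _ _ => sq_nonneg _)
      _ ≤ n * L ^ 2 := hcol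
  -- Cauchy–Schwarz
  have hCS : (A' i j) ^ 2 ≤ (∑ ℓ ∈ S, σ ℓ * (u ℓ i) ^ 2) * ∑ ℓ ∈ S, σ ℓ * (v ℓ j) ^ 2 := by
    rw [hA' i j]
    exact Finset.sum_sq_le_sum_mul_sum_of_sq_eq_mul S
      (fun ℓ _ => mul_nonneg (hσ ℓ) (sq_nonneg _))
      (fun ℓ _ => mul_nonneg (hσ ℓ) (sq_nonneg _))
      (fun ℓ _ => by ring)
  have hsq : (A' i j) ^ 2 ≤ (L / γ) ^ 2 := by
    have h1 : (∑ ℓ ∈ S, σ ℓ * (u ℓ i) ^ 2) * ∑ ℓ ∈ S, σ ℓ * (v ℓ j) ^ 2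
        ≤ (m * L ^ 2 / T) * (n * L ^ 2 / T) := by
      apply mul_le_mul htr_u htr_v
      · exact Finset.sum_nonneg fun ℓ _ => mul_nonneg (hσ ℓ) (sq_nonneg _)
      · positivity
    have h2 : (m * L ^ 2 / T) * (n * L ^ 2 / T) = (L / γ) ^ 2 := by
      rw [hTdef]
      field_simp
      linear_combination (-1 : ℝ) * hN2
    calc (A' i j) ^ 2 ≤ _ := hCS
      _ ≤ (m * L ^ 2 / T) * (n * L ^ 2 / T) := h1
      _ = (L / γ) ^ 2 := h2
  have habs : |A' i j| ≤ L / γ := by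
    have h := Real.sqrt_le_sqrt hsq
    rwa [Real.sqrt_sq_eq_abs, Real.sqrt_sq (by positivity : (0:ℝ) ≤ L / γ)] at h
  refine habs.trans ?_
  apply div_le_div_of_nonneg_left hL.le (by positivity)
  calc γ ^ 3 ≤ γ ^ 1 := pow_le_pow_of_le_one hγ0.le hγ1.le (by norm_num)
    _ = γ := pow_one γ
end
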